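/- For every ε > 0 there exists a constant C > 0 such that for every complex number ω, |∫_{-∞}^{∞} e^{iωt} Φ(t) dt| ≤ C·exp(|ω|^{1+ε}); in particular the entire function ω ↦ ∫ e^{iωt}Φ(t)dt has order at most 1. -/

import Mathlib

/-!
Write `S_k(t) = ∑_{n ∈ ℤ} u^k e^{-u}` with `u = π n² e^{2t}`. Then `Φ = e^{t/2} (2 S₂ - 3 S₁)`,
while `G(t) = e^{t/2} S₀(t)` satisfies `2Φ = G'' - G/4` because `S_k' = 2k S_k - 2 S_{k+1}`.
Jacobi's `θ(1/x) = √x θ(x)` makes `G` even, hence `Φ` is even. For `t ≥ 0` every term of `Φ` is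
dominated by `e^{9t/2 - (π/2) e^{2t}}`, so `|Φ(t)| ≤ K e^{9|t|/2 - (π/2) e^{2|t|}}`. In the
Fourier integral, Young's inequality `|ω| |t| ≤ |ω|^{1+ε} + |t|^{(1+ε)/ε}` splits off
`e^{|ω|^{1+ε}}`, and the double exponential beats every power of `|t|`, leaving a Gaussian.
-/

open MeasureTheory

/-- Polya's function `Φ(t) = ∑_{n≥1} (4π²n⁴e^{9t/2} − 6πn²e^{5t/2}) e^{−πn²e^{2t}}`. -/
noncomputable def Phi (t : ℝ) : ℝ :=
  ∑' n : ℕ,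
    (4 * Real.pi ^ 2 * ((n : ℝ) + 1) ^ 4 * Real.exp (9 * t / 2)
      - 6 * Real.pi * ((n : ℝ) + 1) ^ 2 * Real.exp (5 * t / 2))
    * Real.exp (-Real.pi * ((n : ℝ) + 1) ^ 2 * Real.exp (2 * t))

open Real Filter

noncomputable def thetaArg (n : ℤ) (t : ℝ) : ℝ := π * n ^ 2 * exp (2 * t)

noncomputable def thetaMoment (k : ℕ) (t : ℝ) : ℝ :=
  ∑' n : ℤ, thetaArg n t ^ k * exp (-thetaArg n t)

lemma thetaArg_nonneg (n : ℤ) (t : ℝ) : 0 ≤ thetaArg n t := by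
  unfold thetaArg; positivity

lemma monotone_thetaArg (n : ℤ) : Monotone (thetaArg n) := fun s t h => by
  unfold thetaArg; gcongr

lemma hasDerivAt_thetaArg (n : ℤ) (t : ℝ) : HasDerivAt (thetaArg n) (2 * thetaArg n t) t :=
  (((hasDerivAt_id t).const_mul (2 : ℝ)).exp.const_mul (π * (n : ℝ) ^ 2)).congr_deriv <| by
    simp only [thetaArg, id]; ring

lemma summable_sq_pow_mul_exp_neg_mul_sq (k : ℕ) {c : ℝ} (hc : 0 < c) :
    Summable fun n : ℤ => ((n : ℝ) ^ 2) ^ k * exp (-c * n ^ 2) := by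
  refine (summable_pow_mul_jacobiTheta₂_term_bound 0 (div_pos hc pi_pos) (2 * k)).congr
    fun n => ?_
  rw [pow_mul, Int.cast_abs, sq_abs]
  congr 2
  field_simp
  ring

lemma summable_thetaArg_pow_mul_exp (k : ℕ) (s t : ℝ) :
    Summable fun n : ℤ => thetaArg n t ^ k * exp (-thetaArg n s) := by
  refine ((summable_sq_pow_mul_exp_neg_mul_sq k (by positivity : 0 < π * exp (2 * s))).mul_left
    ((π * exp (2 * t)) ^ k)).congr fun n => ?_
  simp only [thetaArg]; ring_nf

lemma thetaArg_pow_mul_exp_nonneg (k : ℕ) (n : ℤ) (t : ℝ) :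
    0 ≤ thetaArg n t ^ k * exp (-thetaArg n t) :=
  mul_nonneg (pow_nonneg (thetaArg_nonneg n t) k) (exp_pos _).le

lemma thetaArg_pow_mul_exp_le (k : ℕ) (n : ℤ) {s t u : ℝ} (hs : s ≤ t) (hu : t ≤ u) :
    thetaArg n t ^ k * exp (-thetaArg n t) ≤ thetaArg n u ^ k * exp (-thetaArg n s) :=
  mul_le_mul (pow_le_pow_left₀ (thetaArg_nonneg n t) (monotone_thetaArg n hu) k)
    (exp_le_exp.2 (neg_le_neg (monotone_thetaArg n hs))) (exp_pos _).le
    (pow_nonneg (thetaArg_nonneg n u) k)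

lemma hasDerivAt_thetaArg_pow_mul_exp (k : ℕ) (n : ℤ) (t : ℝ) :
    HasDerivAt (fun t => thetaArg n t ^ k * exp (-thetaArg n t))
      (2 * k * (thetaArg n t ^ k * exp (-thetaArg n t))
        - 2 * (thetaArg n t ^ (k + 1) * exp (-thetaArg n t))) t := by
  have h := hasDerivAt_thetaArg n t
  refine ((h.pow k).mul h.neg.exp).congr_deriv ?_
  simp only [Pi.pow_apply, Pi.neg_apply]
  cases k with
  | zero => simp; ring
  | succ k => simp only [Nat.add_sub_cancel]; push_cast; ring

theorem hasDerivAt_thetaMoment (k : ℕ) (t : ℝ) :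
    HasDerivAt (thetaMoment k) (2 * k * thetaMoment k t - 2 * thetaMoment (k + 1) t) t := by
  have hbound : Summable fun n : ℤ =>
      2 * k * (thetaArg n (t + 1) ^ k * exp (-thetaArg n (t - 1)))
        + 2 * (thetaArg n (t + 1) ^ (k + 1) * exp (-thetaArg n (t - 1))) :=
    ((summable_thetaArg_pow_mul_exp k _ _).mul_left _).add
      ((summable_thetaArg_pow_mul_exp (k + 1) _ _).mul_left _)
  have hmem : t ∈ Set.Ioo (t - 1) (t + 1) := ⟨by linarith, by linarith⟩
  have h := hasDerivAt_tsum_of_isPreconnected hbound isOpen_Ioo isPreconnected_Ioo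
    (fun n y _ => hasDerivAt_thetaArg_pow_mul_exp k n y) (fun n y hy => ?_) hmem
    (summable_thetaArg_pow_mul_exp k t t) hmem
  · rwa [Summable.tsum_sub ((summable_thetaArg_pow_mul_exp k t t).mul_left _)
      ((summable_thetaArg_pow_mul_exp (k + 1) t t).mul_left _), tsum_mul_left, tsum_mul_left] at h
  · have h1 := thetaArg_pow_mul_exp_le k n hy.1.le hy.2.le
    have h2 := thetaArg_pow_mul_exp_le (k + 1) n hy.1.le hy.2.le
    have h3 := thetaArg_pow_mul_exp_nonneg k n y
    have h4 := thetaArg_pow_mul_exp_nonneg (k + 1) n y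
    have hk : (0 : ℝ) ≤ k := k.cast_nonneg
    rw [Real.norm_eq_abs, abs_le]
    constructor <;> nlinarith

lemma thetaArg_neg (n : ℤ) (t : ℝ) : thetaArg (-n) t = thetaArg n t := by
  simp [thetaArg]

lemma thetaArg_zero (t : ℝ) : thetaArg 0 t = 0 := by
  simp [thetaArg]

theorem even_exp_mul_thetaMoment_zero :
    Function.Even fun t => exp (t / 2) * thetaMoment 0 t := by
  intro t
  have hS : thetaMoment 0 t = ∑' n : ℤ, exp (-π * exp (2 * t) * n ^ 2) :=
    tsum_congr fun n => by simp only [thetaArg, pow_zero, one_mul]; ring_nf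
  have hS_neg : thetaMoment 0 (-t) = ∑' n : ℤ, exp (-π / exp (2 * t) * n ^ 2) :=
    tsum_congr fun n => by
      rw [thetaArg, pow_zero, one_mul, show 2 * -t = -(2 * t) by ring, exp_neg (2 * t)]; ring_nf
  have hsqrt : exp (2 * t) ^ (1 / 2 : ℝ) = exp t := by
    rw [← exp_mul]; ring_nf
  have h := tsum_exp_neg_mul_int_sq (exp_pos (2 * t))
  rw [hsqrt, ← hS, ← hS_neg] at h
  simp only [h, one_div, ← mul_assoc, ← exp_neg, ← exp_add]
  ring_nf

theorem Function.Even.iteratedDeriv {𝕜 F : Type*} [NontriviallyNormedField 𝕜]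
    [NormedAddCommGroup F] [NormedSpace 𝕜 F] {f : 𝕜 → F} (hf : f.Even) {n : ℕ} (hn : Even n) :
    (iteratedDeriv n f).Even := by
  intro a
  have h := iteratedDeriv_comp_neg n f (-a)
  rwa [funext hf, hn.neg_one_pow, one_smul, neg_neg] at h

lemma iteratedDeriv_two_exp_mul_thetaMoment_zero (t : ℝ) :
    iteratedDeriv 2 (fun t => exp (t / 2) * thetaMoment 0 t) t
      = exp (t / 2) * (thetaMoment 0 t / 4 - 6 * thetaMoment 1 t + 4 * thetaMoment 2 t) := by
  have hexp : ∀ t : ℝ, HasDerivAt (fun t => exp (t / 2)) (exp (t / 2) / 2) t := fun t =>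
    ((hasDerivAt_id t).div_const 2).exp.congr_deriv (by simp [id]; ring)
  have h1 : ∀ t, HasDerivAt (fun t => exp (t / 2) * thetaMoment 0 t)
      (exp (t / 2) * (thetaMoment 0 t / 2 - 2 * thetaMoment 1 t)) t := fun t =>
    ((hexp t).mul (hasDerivAt_thetaMoment 0 t)).congr_deriv (by push_cast; ring)
  have h2 : HasDerivAt (fun t => exp (t / 2) * (thetaMoment 0 t / 2 - 2 * thetaMoment 1 t))
      (exp (t / 2) * (thetaMoment 0 t / 4 - 6 * thetaMoment 1 t + 4 * thetaMoment 2 t)) t :=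
    ((hexp t).mul (((hasDerivAt_thetaMoment 0 t).div_const 2).sub
      ((hasDerivAt_thetaMoment 1 t).const_mul 2))).congr_deriv
      (by simp only [Pi.sub_apply]; push_cast; ring)
  rw [iteratedDeriv_succ, iteratedDeriv_one, funext fun t => (h1 t).deriv, h2.deriv]

theorem Phi_eq_exp_mul_thetaMoment (t : ℝ) :
    Phi t = exp (t / 2) * (2 * thetaMoment 2 t - 3 * thetaMoment 1 t) := by
  set f : ℤ → ℝ := fun n => (2 * thetaArg n t ^ 2 - 3 * thetaArg n t) * exp (-thetaArg n t)
  have hf : 2 * thetaMoment 2 t - 3 * thetaMoment 1 t = ∑' n, f n := by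
    rw [thetaMoment, thetaMoment, ← tsum_mul_left, ← tsum_mul_left,
      ← Summable.tsum_sub ((summable_thetaArg_pow_mul_exp 2 t t).mul_left _)
        ((summable_thetaArg_pow_mul_exp 1 t t).mul_left _)]
    exact tsum_congr fun n => by simp only [f]; ring
  have hfs : Summable f := (((summable_thetaArg_pow_mul_exp 2 t t).mul_left 2).sub
    ((summable_thetaArg_pow_mul_exp 1 t t).mul_left 3)).congr fun n => by simp only [f]; ring
  have hfe : f.Even := fun n => by simp only [f, thetaArg_neg]
  have hf0 : f 0 = 0 := by simp [f, thetaArg_zero]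
  rw [hf, tsum_int_eq_zero_add_two_mul_tsum_pnat hfe hfs,
    tsum_pnat_eq_tsum_succ (f := fun n : ℕ => f n), hf0, zero_add, nsmul_eq_mul,
    ← tsum_mul_left, ← tsum_mul_left, Phi]
  refine tsum_congr fun n => ?_
  rw [show 9 * t / 2 = t / 2 + 2 * t + 2 * t by ring, show 5 * t / 2 = t / 2 + 2 * t by ring]
  simp only [f, thetaArg, exp_add]
  push_cast
  ring_nf

theorem Phi_even : Phi.Even := by
  have hPhi : ∀ t, Phi t = (iteratedDeriv 2 (fun t => exp (t / 2) * thetaMoment 0 t) t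
      - exp (t / 2) * thetaMoment 0 t / 4) / 2 := fun t => by
    rw [Phi_eq_exp_mul_thetaMoment, iteratedDeriv_two_exp_mul_thetaMoment_zero]; ring
  intro t
  have hG := even_exp_mul_thetaMoment_zero t
  beta_reduce at hG
  rw [hPhi, hPhi, even_exp_mul_thetaMoment_zero.iteratedDeriv even_two t, hG]

lemma abs_Phi_term_le {m t : ℝ} (hm : 1 ≤ m) (ht : 0 ≤ t) :
    |(4 * π ^ 2 * m ^ 4 * exp (9 * t / 2) - 6 * π * m ^ 2 * exp (5 * t / 2))
        * exp (-π * m ^ 2 * exp (2 * t))|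
      ≤ (4 * π ^ 2 * m ^ 4 + 6 * π * m ^ 2) * exp (-(π / 2) * m ^ 2)
        * exp (9 * t / 2 - π / 2 * exp (2 * t)) := by
  have hX : 1 ≤ exp (2 * t) := one_le_exp (by linarith)
  have hcoef : |4 * π ^ 2 * m ^ 4 * exp (9 * t / 2) - 6 * π * m ^ 2 * exp (5 * t / 2)|
      ≤ (4 * π ^ 2 * m ^ 4 + 6 * π * m ^ 2) * exp (9 * t / 2) := by
    have h59 : exp (5 * t / 2) ≤ exp (9 * t / 2) := exp_le_exp.2 (by linarith)
    refine (abs_sub _ _).trans ?_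
    rw [abs_of_nonneg (by positivity), abs_of_nonneg (by positivity), add_mul]
    gcongr
  -- `m² + x ≤ 2 m² x` for `m², x ≥ 1` splits the double exponential into two factors
  have hsplit : exp (-π * m ^ 2 * exp (2 * t))
      ≤ exp (-(π / 2) * m ^ 2) * exp (-(π / 2) * exp (2 * t)) := by
    rw [← exp_add]
    refine exp_le_exp.2 ?_
    have hm2 : 1 ≤ m ^ 2 := by nlinarith
    nlinarith [mul_nonneg pi_pos.le (mul_nonneg (sub_nonneg.2 hm2) (sub_nonneg.2 hX)),
      mul_nonneg pi_pos.le (sub_nonneg.2 (one_le_mul_of_one_le_of_one_le hm2 hX))]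
  rw [abs_mul, abs_of_pos (exp_pos _)]
  calc _ ≤ (4 * π ^ 2 * m ^ 4 + 6 * π * m ^ 2) * exp (9 * t / 2)
        * (exp (-(π / 2) * m ^ 2) * exp (-(π / 2) * exp (2 * t))) :=
        mul_le_mul hcoef hsplit (exp_pos _).le (by positivity)
    _ = _ := by rw [sub_eq_add_neg, exp_add (9 * t / 2)]; ring_nf

theorem exists_abs_Phi_le :
    ∃ K, 0 < K ∧ ∀ t, |Phi t| ≤ K * exp (9 * |t| / 2 - π / 2 * exp (2 * |t|)) := by
  set c : ℕ → ℝ := fun n =>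
    (4 * π ^ 2 * ((n : ℝ) + 1) ^ 4 + 6 * π * ((n : ℝ) + 1) ^ 2)
      * exp (-(π / 2) * ((n : ℝ) + 1) ^ 2)
  have hshift : ∀ k, Summable fun n : ℕ =>
      (((n : ℝ) + 1) ^ 2) ^ k * exp (-(π / 2) * ((n : ℝ) + 1) ^ 2) := fun k =>
    ((summable_sq_pow_mul_exp_neg_mul_sq k (half_pos pi_pos)).comp_injective
      (fun a b h => by simpa using h : (fun n : ℕ => ((n + 1 : ℕ) : ℤ)).Injective)).congr
      fun n => by simp only [Function.comp_apply]; push_cast; ring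
  have hc : Summable c := (((hshift 2).mul_left (4 * π ^ 2)).add
    ((hshift 1).mul_left (6 * π))).congr fun n => by simp only [c]; ring
  have hc0 : 0 ≤ ∑' n, c n := tsum_nonneg fun n => by positivity
  refine ⟨∑' n, c n + 1, by linarith, fun t => ?_⟩
  have hPhi_abs : Phi t = Phi |t| := by
    rcases abs_choice t with h | h <;> simp [h, Phi_even t]
  rw [hPhi_abs, Phi, ← Real.norm_eq_abs]
  refine (tsum_of_norm_bounded (hc.hasSum.mul_right _) fun n => ?_).trans (by gcongr; linarith)
  rw [Real.norm_eq_abs]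
  exact abs_Phi_term_le (by linarith [n.cast_nonneg (α := ℝ)]) (abs_nonneg t)

lemma mul_le_rpow_add_rpow {ε b s : ℝ} (hε : 0 < ε) (hb : 0 ≤ b) (hs : 0 ≤ s) :
    b * s ≤ b ^ (1 + ε) + s ^ ((1 + ε) / ε) := by
  have hpq : (1 + ε).HolderConjugate ((1 + ε) / ε) := by
    convert Real.HolderConjugate.conjExponent (by linarith : 1 < 1 + ε) using 1
    rw [Real.conjExponent, add_sub_cancel_left]
  calc b * s ≤ b ^ (1 + ε) / (1 + ε) + s ^ ((1 + ε) / ε) / ((1 + ε) / ε) :=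
        young_inequality_of_nonneg hb hs hpq
    _ ≤ b ^ (1 + ε) + s ^ ((1 + ε) / ε) :=
        add_le_add (div_le_self (rpow_nonneg hb _) hpq.lt.le)
          (div_le_self (rpow_nonneg hs _) hpq.symm.lt.le)

lemma exists_rpow_le_mul_exp_add {r c : ℝ} (hr : 0 ≤ r) (hc : 0 < c) :
    ∃ C, ∀ s, 0 ≤ s → s ^ r ≤ c * exp (2 * s) + C := by
  obtain ⟨S, hS⟩ := eventually_atTop.1 ((isLittleO_rpow_exp_pos_mul_atTop r two_pos).bound hc)
  have hS0 := rpow_nonneg (le_max_right S 0) r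
  refine ⟨max S 0 ^ r, fun s hs => ?_⟩
  rcases le_total S s with h | h
  · have := hS s h
    rw [norm_of_nonneg (rpow_nonneg hs r), norm_of_nonneg (exp_pos _).le] at this
    linarith
  · have := rpow_le_rpow hs (h.trans (le_max_left S 0)) hr
    nlinarith [exp_pos (2 * s)]

theorem exists_mul_add_sub_exp_le {ε : ℝ} (hε : 0 < ε) : ∃ C, ∀ b s, 0 ≤ b → 0 ≤ s →
    b * s + 9 * s / 2 - π / 2 * exp (2 * s) ≤ b ^ (1 + ε) + C - s ^ 2 := by
  -- each of the three powers of `s` takes `π/27 · e^{2s}`, and `13π/54 < π/2`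
  have hc : 0 < π / 27 := by positivity
  obtain ⟨C₁, h₁⟩ := exists_rpow_le_mul_exp_add (r := (1 + ε) / ε) (by positivity) hc
  obtain ⟨C₂, h₂⟩ := exists_rpow_le_mul_exp_add zero_le_one hc
  obtain ⟨C₃, h₃⟩ := exists_rpow_le_mul_exp_add zero_le_two hc
  refine ⟨C₁ + 9 * C₂ / 2 + C₃, fun b s hb hs => ?_⟩
  have hyoung := mul_le_rpow_add_rpow hε hb hs
  have hpow := h₁ s hs
  have hlin := h₂ s hs
  have hsq := h₃ s hs
  rw [rpow_one] at hlin
  rw [rpow_two] at hsq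
  nlinarith [mul_pos pi_pos (exp_pos (2 * s))]

lemma norm_cexp_I_mul_le (ω : ℂ) (t : ℝ) :
    ‖Complex.exp (Complex.I * ω * t)‖ ≤ exp (‖ω‖ * |t|) := by
  rw [Complex.norm_exp]
  refine exp_le_exp.2 ?_
  have : (Complex.I * ω * t).re = -(ω.im * t) := by simp [Complex.mul_re]
  rw [this]
  calc -(ω.im * t) ≤ |ω.im| * |t| := by rw [← abs_mul]; exact neg_le_abs _
    _ ≤ ‖ω‖ * |t| := by gcongr; exact Complex.abs_im_le_norm ω

/-- The entire function `ω ↦ ∫ e^{iωt} Φ(t) dt` has order at most 1: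
for every `ε > 0` there is `C > 0` with `|∫ e^{iωt}Φ(t)dt| ≤ C exp(|ω|^{1+ε})`. -/
theorem xi_order_le_one :
    ∀ ε : ℝ, 0 < ε → ∃ C : ℝ, 0 < C ∧ ∀ ω : ℂ,
      ‖∫ t : ℝ, Complex.exp (Complex.I * ω * t) * (Phi t : ℂ)‖ ≤
        C * Real.exp (‖ω‖ ^ (1 + ε)) := by
  intro ε hε
  obtain ⟨K, hK, hPhi⟩ := exists_abs_Phi_le
  obtain ⟨C, hC⟩ := exists_mul_add_sub_exp_le hε
  refine ⟨K * exp C * √π, by positivity, fun ω => ?_⟩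
  have hbound : ∀ t : ℝ, ‖Complex.exp (Complex.I * ω * t) * (Phi t : ℂ)‖
      ≤ K * exp C * exp (‖ω‖ ^ (1 + ε)) * exp (-1 * t ^ 2) := fun t =>
    calc _ ≤ exp (‖ω‖ * |t|) * (K * exp (9 * |t| / 2 - π / 2 * exp (2 * |t|))) := by
          rw [norm_mul, Complex.norm_real, Real.norm_eq_abs]
          exact mul_le_mul (norm_cexp_I_mul_le ω t) (hPhi t) (abs_nonneg _) (exp_pos _).le
      _ = K * exp (‖ω‖ * |t| + 9 * |t| / 2 - π / 2 * exp (2 * |t|)) := by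
          rw [add_sub_assoc, exp_add]; ring
      _ ≤ K * exp (‖ω‖ ^ (1 + ε) + C - |t| ^ 2) :=
          mul_le_mul_of_nonneg_left (exp_le_exp.2 (hC _ _ (norm_nonneg ω) (abs_nonneg t))) hK.le
      _ = _ := by rw [sq_abs, sub_eq_add_neg, exp_add, exp_add]; ring_nf
  calc _ ≤ ∫ t : ℝ, K * exp C * exp (‖ω‖ ^ (1 + ε)) * exp (-1 * t ^ 2) :=
        norm_integral_le_of_norm_le ((integrable_exp_neg_mul_sq one_pos).const_mul _)
          (Eventually.of_forall hbound)
    _ = K * exp C * √π * exp (‖ω‖ ^ (1 + ε)) := by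
        rw [integral_const_mul, integral_gaussian, div_one]; ring
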